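/- For a ring R, if F is a flat left R-module, then the double character module F^{++} = Hom_Z(Hom_Z(F, Q/Z), Q/Z) over a right coherent ring R is again a flat left R-module. -/

import Mathlib

open CategoryTheory

noncomputable section

/-- The character module `M⁺ = Hom_ℤ(M, ℚ/ℤ)`. -/
def CharMod (M : Type) [AddCommGroup M] : Type := M →+ AddCircle (1 : ℚ)

namespace CharMod

instance (M : Type) [AddCommGroup M] : AddCommGroup (CharMod M) :=
  inferInstanceAs (AddCommGroup (M →+ AddCircle (1 : ℚ)))

instance (M : Type) [AddCommGroup M] : FunLike (CharMod M) M (AddCircle (1 : ℚ)) :=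
  inferInstanceAs (FunLike (M →+ AddCircle (1 : ℚ)) M _)

instance (M : Type) [AddCommGroup M] :
    AddMonoidHomClass (CharMod M) M (AddCircle (1 : ℚ)) :=
  inferInstanceAs (AddMonoidHomClass (M →+ AddCircle (1 : ℚ)) M _)

@[ext] theorem ext {M : Type} [AddCommGroup M] {c c' : CharMod M}
    (h : ∀ x, c x = c' x) : c = c' := DFunLike.ext _ _ h

/-- If `M` is a left `R`-module, `M⁺` is a right `R`-module. -/
instance moduleRight (R M : Type) [Ring R] [AddCommGroup M] [Module R M] :
    Module Rᵐᵒᵖ (CharMod M) where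
  smul r c := (c : M →+ AddCircle (1 : ℚ)).comp (DistribMulAction.toAddMonoidHom M r.unop)
  one_smul c := by ext x; show c ((1 : R) • x) = c x; rw [one_smul]
  mul_smul r s c := by
    ext x
    show c (((r * s).unop) • x) = c (s.unop • r.unop • x)
    rw [MulOpposite.unop_mul, mul_smul]
  smul_zero r := by ext x; rfl
  smul_add r c d := by ext x; rfl
  add_smul r s c := by
    ext x
    show c (((r + s).unop) • x) = c (r.unop • x) + c (s.unop • x)
    rw [MulOpposite.unop_add, add_smul, map_add]
  zero_smul c := by
    ext x
    show c ((0 : R) • x) = 0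
    rw [zero_smul, map_zero]

/-- If `M` is a right `R`-module, `M⁺` is a left `R`-module. -/
instance moduleLeft (R M : Type) [Ring R] [AddCommGroup M] [Module Rᵐᵒᵖ M] :
    Module R (CharMod M) where
  smul r c := (c : M →+ AddCircle (1 : ℚ)).comp
    (DistribMulAction.toAddMonoidHom M (MulOpposite.op r))
  one_smul c := by ext x; show c ((MulOpposite.op (1 : R)) • x) = c x; simp
  mul_smul r s c := by
    ext x
    show c ((MulOpposite.op (r * s)) • x) = c (MulOpposite.op s • MulOpposite.op r • x)
    rw [MulOpposite.op_mul, mul_smul]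
  smul_zero r := by ext x; rfl
  smul_add r c d := by ext x; rfl
  add_smul r s c := by
    ext x
    show c ((MulOpposite.op (r + s)) • x) = c (MulOpposite.op r • x) + c (MulOpposite.op s • x)
    rw [MulOpposite.op_add, add_smul, map_add]
  zero_smul c := by
    ext x
    show c ((MulOpposite.op (0 : R)) • x) = 0
    rw [MulOpposite.op_zero, zero_smul, map_zero]

end CharMod

/-- The canonical evaluation map `M → M⁺⁺`. -/
def evalCharChar (R M : Type) [Ring R] [AddCommGroup M] [Module R M] :
    M →ₗ[R] CharMod (CharMod M) where
  toFun m := { toFun := fun c => c m, map_zero' := rfl, map_add' := fun _ _ => rfl }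
  map_add' m m' := by ext c; exact map_add c m m'
  map_smul' r m := by ext c; rfl

/-- A ring is right coherent if every finitely generated right ideal is finitely presented. -/
def RightCoherent (R : Type) [Ring R] : Prop :=
  ∀ I : Submodule Rᵐᵒᵖ R, I.FG → Module.FinitePresentation Rᵐᵒᵖ I

/-- Flatness over a possibly noncommutative ring, phrased via Lambek's criterion:
a left module is flat iff its character module is an injective right module. -/
def IsFlatMod (R M : Type) [Ring R] [AddCommGroup M] [Module R M] : Prop :=
  Module.Injective Rᵐᵒᵖ (CharMod M)

/-- An injective linear map is a pure injection if every map from a finitely presented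
module to the cokernel lifts; this is the standard purity criterion. -/
def IsPureInjection {R M N : Type} [Ring R] [AddCommGroup M] [AddCommGroup N]
    [Module R M] [Module R N] (f : M →ₗ[R] N) : Prop :=
  Function.Injective f ∧
  ∀ (P : Type) [AddCommGroup P] [Module R P], Module.FinitePresentation R P →
    ∀ g : P →ₗ[R] (N ⧸ LinearMap.range f),
      ∃ h : P →ₗ[R] N, (LinearMap.range f).mkQ ∘ₗ h = g

/-- A module is pure injective if it is injective relative to pure injections. -/
def IsPureInjectiveModule (R C : Type) [Ring R] [AddCommGroup C] [Module R C] : Prop :=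
  ∀ (A B : Type) [AddCommGroup A] [AddCommGroup B] [Module R A] [Module R B]
    (f : A →ₗ[R] B), IsPureInjection f →
    ∀ g : A →ₗ[R] C, ∃ h : B →ₗ[R] C, h ∘ₗ f = g

/-- An unbounded ℤ-indexed sequence of modules with maps going down. -/
structure Cx (S : Type) [Ring S] where
  X : ℤ → ModuleCat.{0} S
  d : ∀ n : ℤ, X (n + 1) ⟶ X n

namespace Cx

variable {S : Type} [Ring S]

/-- The complex is exact at every spot. -/
def Exact (C : Cx S) : Prop := ∀ n : ℤ, Function.Exact (C.d (n + 1)) (C.d n)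

/-- `Hom(C, P)` is exact. -/
def HomExact (C : Cx S) (P : ModuleCat S) : Prop :=
  ∀ (n : ℤ) (f : C.X (n + 1) ⟶ P), C.d (n + 1) ≫ f = 0 →
    ∃ g : C.X n ⟶ P, C.d n ≫ g = f

/-- `Hom(E, C)` is exact. -/
def CoHomExact (C : Cx S) (E : ModuleCat S) : Prop :=
  ∀ (n : ℤ) (f : E ⟶ C.X (n + 1)), f ≫ C.d n = 0 →
    ∃ g : E ⟶ C.X (n + 1 + 1), g ≫ C.d (n + 1) = f

end Cx

/-- `E ⊗_R C` is exact for every injective right `R`-module `E`, expressed via the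
standard character-module duality: `E ⊗ C` is exact iff `Hom_R(C, E⁺)` is exact. -/
def InjTensorExact (R : Type) [Ring R] (C : Cx R) : Prop :=
  ∀ (E : Type) [AddCommGroup E] [Module Rᵐᵒᵖ E], Module.Injective Rᵐᵒᵖ E →
    C.HomExact (ModuleCat.of R (CharMod E))

/-- A Gorenstein projective module: a cycle of a totally acyclic complex of projectives. -/
def IsGorensteinProjective (R M : Type) [Ring R] [AddCommGroup M] [Module R M] : Prop :=
  ∃ C : Cx R,
    (∀ n, Module.Projective R (C.X n)) ∧ C.Exact ∧
    (∀ P : ModuleCat R, Module.Projective R P → C.HomExact P) ∧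
    Nonempty (M ≃ₗ[R] LinearMap.ker (C.d (-1)).hom)

/-- A Gorenstein flat module: a cycle of an exact `Inj ⊗ -`-exact complex of flats. -/
def IsGorensteinFlat (R M : Type) [Ring R] [AddCommGroup M] [Module R M] : Prop :=
  ∃ C : Cx R,
    (∀ n, IsFlatMod R (C.X n)) ∧ C.Exact ∧ InjTensorExact R C ∧
    Nonempty (M ≃ₗ[R] LinearMap.ker (C.d (-1)).hom)

/-- A Gorenstein injective module: a cycle of an exact `Hom(Inj, -)`-exact complex of
injectives. -/
def IsGorensteinInjective (S N : Type) [Ring S] [AddCommGroup N] [Module S N] : Prop :=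
  ∃ C : Cx S,
    (∀ n, Module.Injective S (C.X n)) ∧ C.Exact ∧
    (∀ E : ModuleCat S, Module.Injective S E → C.CoHomExact E) ∧
    Nonempty (N ≃ₗ[S] LinearMap.ker (C.d (-1)).hom)

/-- Projective dimension at most `n`, via syzygies. -/
def projDimLE (R : Type) [Ring R] : ℕ → ModuleCat R → Prop
  | 0, M => Module.Projective R M
  | n + 1, M => ∃ (K P : ModuleCat R) (i : K ⟶ P) (p : P ⟶ M),
      Module.Projective R P ∧ Function.Injective i ∧ Function.Surjective p ∧
      Function.Exact i p ∧ projDimLE R n K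

/-- Injective dimension at most `n`, via cosyzygies. -/
def injDimLE (R : Type) [Ring R] : ℕ → ModuleCat R → Prop
  | 0, M => Module.Injective R M
  | n + 1, M => ∃ (E C' : ModuleCat R) (i : M ⟶ E) (p : E ⟶ C'),
      Module.Injective R E ∧ Function.Injective i ∧ Function.Surjective p ∧
      Function.Exact i p ∧ injDimLE R n C'

/-- Gorenstein projective dimension at most `n`. -/
def gpdLE (R : Type) [Ring R] : ℕ → ModuleCat R → Prop
  | 0, M => IsGorensteinProjective R M
  | n + 1, M => ∃ (K P : ModuleCat R) (i : K ⟶ P) (p : P ⟶ M),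
      IsGorensteinProjective R P ∧ Function.Injective i ∧ Function.Surjective p ∧
      Function.Exact i p ∧ gpdLE R n K

/-- `R` is left `n`-perfect: every flat left module has projective dimension at most `n`. -/
def LeftNPerfect (R : Type) [Ring R] (n : ℕ) : Prop :=
  ∀ M : ModuleCat R, IsFlatMod R M → projDimLE R n M

/-- `Ext^n(M, N) = 0`. -/
abbrev extVanish (R : Type) [Ring R] (n : ℕ) (M N : ModuleCat R) : Prop :=
  Subsingleton ((((Ext ℤ (ModuleCat R) n).obj (Opposite.op M)).obj N : Type))

/-- A cotorsion module: `Ext^1(K, F) = 0` for every flat `K`. -/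
def IsCotorsion (R F : Type) [Ring R] [AddCommGroup F] [Module R F] : Prop :=
  ∀ (K : ModuleCat R), IsFlatMod R K → extVanish R 1 K (ModuleCat.of R F)

/-- Vanishing of `Ext^1` in an abelian category, via splitting of extensions. -/
def Ext1IsZero {C : Type*} [Category C] [Abelian C] (X Y : C) : Prop :=
  ∀ (E : C) (i : Y ⟶ E) (p : E ⟶ X) (w : i ≫ p = 0),
    (ShortComplex.mk i p w).ShortExact → ∃ s : X ⟶ E, s ≫ p = 𝟙 X

/-!
Let `E = F⁺`, an injective right module, and `X = E⁺`. By Baer's criterion, a map `f : J → X⁺`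
on a right ideal extends to `R` once some `χ ∈ X⁺` satisfies `χ (j x) = f j x`; since `ℚ/ℤ` is
divisible, such a `χ` exists as soon as `∑ jᵢ xᵢ = 0` in `X` forces `∑ f jᵢ xᵢ = 0`.
By coherence the relations `∑ᵢ jᵢ r_{t,i} = 0` among `j₁, …, jₙ` are generated by finitely many
`r_t`. The character `e ↦ ∑ xᵢ eᵢ` of `Eⁿ` kills every tuple satisfying these relations (such a
tuple is `(e₀ jᵢ)ᵢ` because `E` is injective), so it factors through `e ↦ (∑ᵢ eᵢ r_{t,i})_t`,
i.e. `xᵢ = ∑_t r_{t,i} z_t`. Hence `∑ f jᵢ xᵢ = ∑_t f (∑ᵢ jᵢ r_{t,i}) z_t = 0`.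
-/

open LinearMap MulOpposite

namespace CharMod

variable {R M : Type} [Ring R] [AddCommGroup M]

@[simp]
lemma sum_apply {ι : Type} (s : Finset ι) (c : ι → CharMod M) (x : M) :
    (∑ i ∈ s, c i) x = ∑ i ∈ s, c i x :=
  AddMonoidHom.finsetSum_apply c s x

@[simp]
lemma smul_apply_unop [Module R M] (r : Rᵐᵒᵖ) (c : CharMod M) (x : M) :
    (r • c) x = c (r.unop • x) := rfl

@[simp]
lemma smul_apply_op [Module Rᵐᵒᵖ M] (r : R) (c : CharMod M) (x : M) :
    (r • c) x = c (op r • x) := rfl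

end CharMod

lemma Module.Baer.exists_comp_eq_of_ker_le {S A B Q : Type} [Ring S] [AddCommGroup A]
    [AddCommGroup B] [AddCommGroup Q] [Module S A] [Module S B] [Module S Q]
    (hQ : Module.Baer S Q) (f : A →ₗ[S] B) (g : A →ₗ[S] Q) (h : ker f ≤ ker g) :
    ∃ χ : B →ₗ[S] Q, χ ∘ₗ f = g := by
  obtain ⟨χ, hχ⟩ := hQ.extension_property ((ker f).liftQ f le_rfl)
    (by rw [← LinearMap.ker_eq_bot]; exact (ker f).ker_liftQ_eq_bot f le_rfl le_rfl)
    ((ker f).liftQ g h)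
  exact ⟨χ, LinearMap.ext fun a => LinearMap.congr_fun hχ (Submodule.Quotient.mk a)⟩

lemma AddCircle.exists_comp_eq_of_ker_le {A B : Type} [AddCommGroup A] [AddCommGroup B]
    (f : A →+ B) (g : A →+ AddCircle (1 : ℚ)) (h : f.ker ≤ g.ker) :
    ∃ χ : B →+ AddCircle (1 : ℚ), χ.comp f = g := by
  obtain ⟨χ, hχ⟩ := (Module.Baer.of_divisible _).exists_comp_eq_of_ker_le f.toIntLinearMap
    g.toIntLinearMap h
  exact ⟨χ, congr(LinearMap.toAddMonoidHom $hχ)⟩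

lemma Module.Injective.exists_smul_eq_of_ker_le {S E ι : Type} [Ring S] [AddCommGroup E]
    [Module S E] [Module.Injective S E] [Fintype ι] (j : ι → S) (e : ι → E)
    (h : ker (Fintype.linearCombination S j) ≤ ker (Fintype.linearCombination S e)) :
    ∃ e₀ : E, ∀ i, j i • e₀ = e i := by
  classical
  obtain ⟨ψ, hψ⟩ := (Module.Baer.of_injective ‹_›).exists_comp_eq_of_ker_le
    (Fintype.linearCombination S j) (Fintype.linearCombination S e) h
  refine ⟨ψ 1, fun i => ?_⟩
  have := LinearMap.congr_fun hψ (Pi.single i 1)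
  simp only [LinearMap.comp_apply, Fintype.linearCombination_apply_single, one_smul] at this
  rw [← this, ← map_smul, smul_eq_mul, mul_one]

lemma RightCoherent.fg_ker_linearCombination {R ι : Type} [Ring R] [Fintype ι]
    (hcoh : RightCoherent R) (j : ι → Rᵐᵒᵖ) :
    (ker (Fintype.linearCombination Rᵐᵒᵖ j)).FG := by
  set ℓ := Fintype.linearCombination Rᵐᵒᵖ (fun i => (j i).unop)
  have hℓ : ∀ a, ℓ a = (Fintype.linearCombination Rᵐᵒᵖ j a).unop := fun a => by
    simp only [Fintype.linearCombination_apply, Finset.unop_sum, ℓ]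
    rfl
  have hker : ker ℓ = ker (Fintype.linearCombination Rᵐᵒᵖ j) := by
    ext a
    simp only [mem_ker, hℓ, unop_eq_zero_iff]
  have := hcoh (range ℓ) (Submodule.fg_range ℓ)
  rw [← hker, ← ker_rangeRestrict]
  exact Module.FinitePresentation.fg_ker _ ℓ.surjective_rangeRestrict

/-- The equational criterion of flatness for `E⁺`, relative to generators `T` of the relations
of `j`. -/
lemma CharMod.exists_relations_of_sum_smul_eq_zero {R E ι : Type} [Ring R] [AddCommGroup E]
    [Module Rᵐᵒᵖ E] [Module.Injective Rᵐᵒᵖ E] [Fintype ι] (j : ι → Rᵐᵒᵖ)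
    (hj : (ker (Fintype.linearCombination Rᵐᵒᵖ j)).FG) (x : ι → CharMod E)
    (hx : ∑ i, (j i).unop • x i = 0) :
    ∃ T : Finset (ι → Rᵐᵒᵖ), (∀ t ∈ T, Fintype.linearCombination Rᵐᵒᵖ j t = 0) ∧
      ∃ z : T → CharMod E, ∀ i, x i = ∑ t : T, ((t : ι → Rᵐᵒᵖ) i).unop • z t := by
  classical
  obtain ⟨T, hT⟩ := hj
  refine ⟨T, fun t ht => by rw [← mem_ker, ← hT]; exact Submodule.subset_span ht, ?_⟩
  let Y : (ι → E) →+ AddCircle (1 : ℚ) :=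
    AddMonoidHom.mk' (fun e => ∑ i, x i (e i)) fun e e' => by
      simp only [Pi.add_apply, map_add, Finset.sum_add_distrib]
  let D : (ι → E) →+ (T → E) :=
    AddMonoidHom.mk' (fun e t => Fintype.linearCombination Rᵐᵒᵖ e t) fun e e' => by
      ext t
      simp only [Fintype.linearCombination_apply, Pi.add_apply, smul_add, Finset.sum_add_distrib]
  have hYD : D.ker ≤ Y.ker := by
    intro e he
    rw [AddMonoidHom.mem_ker] at he ⊢
    have hle : ker (Fintype.linearCombination Rᵐᵒᵖ j) ≤ ker (Fintype.linearCombination Rᵐᵒᵖ e) := by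
      rw [← hT, Submodule.span_le]
      exact fun t ht => congr_fun he ⟨t, ht⟩
    obtain ⟨e₀, he₀⟩ := Module.Injective.exists_smul_eq_of_ker_le j e hle
    calc ∑ i, x i (e i) = (∑ i, (j i).unop • x i) e₀ := by
          simp [← he₀]
      _ = 0 := by rw [hx]; rfl
  obtain ⟨Z, hZ⟩ := AddCircle.exists_comp_eq_of_ker_le D Y hYD
  refine ⟨fun t => Z.comp (AddMonoidHom.single (fun _ : T => E) t), fun i => ?_⟩
  ext e
  calc x i e = Y (Pi.single i e) := by simp [Y, Pi.single_apply, apply_ite]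
    _ = Z (D (Pi.single i e)) := by rw [← hZ]; rfl
    _ = Z (∑ t : T, Pi.single t ((t : ι → Rᵐᵒᵖ) i • e)) := by
        congr 1
        rw [Finset.univ_sum_single]
        ext t
        simp [D, Fintype.linearCombination_apply, Pi.single_apply]
    _ = _ := by rw [map_sum, CharMod.sum_apply]; rfl

namespace RightCoherent

variable {R E : Type} [Ring R] [AddCommGroup E] [Module Rᵐᵒᵖ E] [Module.Injective Rᵐᵒᵖ E]

lemma exists_charMod_apply_unop_smul (hcoh : RightCoherent R) (J : Ideal Rᵐᵒᵖ)
    (f : J →ₗ[Rᵐᵒᵖ] CharMod (CharMod E)) :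
    ∃ χ : CharMod (CharMod E), ∀ (a : J) (x : CharMod E), χ ((a : Rᵐᵒᵖ).unop • x) = f a x := by
  classical
  let Φ : (J →₀ CharMod E) →+ CharMod E :=
    Finsupp.liftAddHom fun a => DistribSMul.toAddMonoidHom (CharMod E) (a : Rᵐᵒᵖ).unop
  let φ : (J →₀ CharMod E) →+ AddCircle (1 : ℚ) :=
    Finsupp.liftAddHom fun a => AddMonoidHomClass.toAddMonoidHom (f a)
  have hΦφ : Φ.ker ≤ φ.ker := by
    intro c hc
    rw [AddMonoidHom.mem_ker] at hc ⊢
    let j : c.support → Rᵐᵒᵖ := fun a => ((a : J) : Rᵐᵒᵖ)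
    have hx : ∑ a : c.support, (j a).unop • c a = 0 := by
      rwa [Finsupp.liftAddHom_apply, Finsupp.sum, ← Finset.sum_coe_sort] at hc
    obtain ⟨T, hT, z, hz⟩ := CharMod.exists_relations_of_sum_smul_eq_zero j
      (hcoh.fg_ker_linearCombination j) (fun a => c a) hx
    have hbal : ∀ t ∈ T, ∀ w, ∑ a : c.support, f a ((t a).unop • w) = 0 := by
      intro t ht w
      have hrel : ∑ a : c.support, t a • (a : J) = 0 :=
        Subtype.ext (by simpa [Fintype.linearCombination_apply, j] using hT t ht)
      calc ∑ a : c.support, f a ((t a).unop • w) = f (∑ a : c.support, t a • (a : J)) w := by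
            simp [map_sum, map_smul]
        _ = 0 := by rw [hrel, map_zero]; rfl
    calc φ c = ∑ a : c.support, f a (c a) := by
          rw [Finsupp.liftAddHom_apply, Finsupp.sum, ← Finset.sum_coe_sort]
          rfl
      _ = ∑ t : T, ∑ a : c.support, f a ((t.1 a).unop • z t) := by
          rw [Finset.sum_comm]
          exact Finset.sum_congr rfl fun a _ => by rw [hz a, map_sum]
      _ = 0 := Finset.sum_eq_zero fun t _ => hbal t t.2 (z t)
  obtain ⟨χ, hχ⟩ := AddCircle.exists_comp_eq_of_ker_le Φ φ hΦφ
  refine ⟨χ, fun a x => ?_⟩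
  have := DFunLike.congr_fun hχ (Finsupp.single a x)
  rwa [AddMonoidHom.comp_apply, Finsupp.liftAddHom_apply_single,
    Finsupp.liftAddHom_apply_single] at this

theorem injective_charMod_charMod (hcoh : RightCoherent R) :
    Module.Injective Rᵐᵒᵖ (CharMod (CharMod E)) := by
  refine Module.Baer.injective fun J f => ?_
  obtain ⟨χ, hχ⟩ := hcoh.exists_charMod_apply_unop_smul J f
  exact ⟨LinearMap.toSpanSingleton Rᵐᵒᵖ _ χ, fun a ha => by ext x; exact hχ ⟨a, ha⟩ x⟩

end RightCoherent

/-- over a right coherent ring, the double character module of a flat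
left module is again flat. -/
theorem flat_double_character (R : Type) [Ring R] (hcoh : RightCoherent R)
    (F : Type) [AddCommGroup F] [Module R F] (hF : IsFlatMod R F) :
    IsFlatMod R (CharMod (CharMod F)) :=
  have : Module.Injective Rᵐᵒᵖ (CharMod F) := hF
  hcoh.injective_charMod_charMod

end
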